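/- arXiv:1504.01472 — 2 statements merged into one kernel-verified Lean document; each statement's English description precedes it below -/
import Mathlib

section
/- There exists an independent set of size 381 in the third strong power of the 15-cycle; that is, there is a set S of 381 vectors in (ZMod 15)^3 such that for any two distinct u, v in S there exists a coordinate i with min(|u_i − v_i|, 15 − |u_i − v_i|) ≥ 2. Consequently α(C_15^3) ≥ 381. -/
/-- Circular distance between two elements of `ZMod p`, computed via representatives
in `{0, …, p−1}`: `min (|x − y|) (p − |x − y|)`. -/
def circDist (p : ℕ) (x y : ZMod p) : ℕ :=
  min ((x.val : ℤ) - (y.val : ℤ)).natAbs (p - ((x.val : ℤ) - (y.val : ℤ)).natAbs)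

lemma circDist_comm (p : ℕ) (x y : ZMod p) : circDist p x y = circDist p y x := by
  unfold circDist
  rw [show ((x.val : ℤ) - y.val).natAbs = ((y.val : ℤ) - x.val).natAbs by omega]

/-- The `d`-th strong power of the cycle `C_p`: vertices are vectors in `(ZMod p)^d`,
and distinct vertices are adjacent iff every coordinate has circular distance at most 1. -/
def cyclePow (p d : ℕ) : SimpleGraph (Fin d → ZMod p) where
  Adj u v := u ≠ v ∧ ∀ i, circDist p (u i) (v i) ≤ 1
  symm := ⟨by
    intro u v ⟨h1, h2⟩
    exact ⟨h1.symm, fun i => (circDist_comm p (v i) (u i)) ▸ h2 i⟩⟩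
  loopless := ⟨fun v h => h.1 rfl⟩

/-- The independence number of a graph: the largest size of a finite set of
pairwise non-adjacent vertices. -/
noncomputable def indepNum {V : Type*} (G : SimpleGraph V) : ℕ :=
  sSup {n | ∃ s : Finset V, (∀ u ∈ s, ∀ v ∈ s, u ≠ v → ¬ G.Adj u v) ∧ s.card = n}

/-!
The bound is witnessed by an explicit list of 381 vectors of `(ZMod 15)^3`, any two of which are at
circular distance at least 2 in some coordinate; this is checked by evaluation in the kernel. Being
far apart is an irreflexive relation, so the list has no repetitions and its members form a set of
381 vertices, and far-apart vertices are non-adjacent in `C_15^3`.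
-/
section Separation

variable {p d : ℕ}

lemma circDist_self (x : ZMod p) : circDist p x x = 0 := by
  simp [circDist]

def FarApart (p : ℕ) {d : ℕ} (u v : Fin d → ZMod p) : Prop :=
  ∃ i, 2 ≤ circDist p (u i) (v i)

instance : DecidableRel (FarApart p (d := d)) :=
  fun u v => inferInstanceAs (Decidable (∃ i, 2 ≤ circDist p (u i) (v i)))

instance : Std.Symm (FarApart p (d := d)) :=
  ⟨fun u v ⟨i, hi⟩ => ⟨i, circDist_comm p (u i) (v i) ▸ hi⟩⟩

instance : Std.Irrefl (FarApart p (d := d)) :=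
  ⟨fun u ⟨i, hi⟩ => by rw [circDist_self] at hi; omega⟩

lemma FarApart.not_adj {u v : Fin d → ZMod p} (h : FarApart p u v) :
    ¬ (cyclePow p d).Adj u v := fun hadj => by
  obtain ⟨i, hi⟩ := h
  have := hadj.2 i
  omega

end Separation

lemma List.Pairwise.exists_finset_card_eq {α : Type*} [DecidableEq α] {R : α → α → Prop}
    [Std.Symm R] [Std.Irrefl R] {l : List α} (hl : l.Pairwise R) :
    ∃ s : Finset α, s.card = l.length ∧ ∀ a ∈ s, ∀ b ∈ s, a ≠ b → R a b :=
  ⟨l.toFinset, List.toFinset_card_of_nodup hl.nodup, fun _ ha _ hb =>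
    hl.forall (List.mem_toFinset.1 ha) (List.mem_toFinset.1 hb)⟩

lemma card_le_indepNum {V : Type*} [Fintype V] (G : SimpleGraph V) {s : Finset V}
    (hs : ∀ u ∈ s, ∀ v ∈ s, u ≠ v → ¬ G.Adj u v) : s.card ≤ indepNum G :=
  le_csSup ⟨Fintype.card V, by rintro _ ⟨t, -, rfl⟩; exact t.card_le_univ⟩ ⟨s, hs, rfl⟩

def indepCertificate : List (Fin 3 → ZMod 15) := [
  ![2, 0, 0], ![4, 0, 0], ![6, 1, 0], ![8, 2, 0], ![10, 2, 0], ![12, 3, 0],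
  ![14, 3, 0], ![1, 4, 0], ![3, 5, 0], ![12, 5, 0], ![14, 5, 0], ![1, 6, 0],
  ![3, 7, 0], ![5, 7, 0], ![14, 7, 0], ![1, 8, 0], ![3, 9, 0], ![5, 9, 0],
  ![7, 10, 0], ![5, 11, 0], ![9, 11, 0], ![7, 12, 0], ![9, 13, 0], ![11, 13, 0],
  ![0, 14, 0], ![13, 14, 0], ![8, 0, 1], ![10, 0, 1], ![12, 1, 1], ![14, 1, 1],
  ![1, 2, 1], ![3, 3, 1], ![5, 3, 1], ![7, 4, 1], ![9, 4, 1], ![5, 5, 1],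
  ![7, 6, 1], ![9, 6, 1], ![11, 7, 1], ![7, 8, 1], ![9, 9, 1], ![11, 9, 1],
  ![0, 10, 1], ![13, 10, 1], ![2, 11, 1], ![11, 11, 1], ![0, 12, 1], ![13, 12, 1],
  ![2, 13, 1], ![4, 13, 1], ![6, 14, 1], ![1, 0, 2], ![3, 1, 2], ![5, 1, 2],
  ![7, 2, 2], ![9, 2, 2], ![11, 3, 2], ![0, 4, 2], ![13, 4, 2], ![2, 5, 2],
  ![11, 5, 2], ![0, 6, 2], ![13, 6, 2], ![2, 7, 2], ![4, 7, 2], ![0, 8, 2],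
  ![13, 8, 2], ![2, 9, 2], ![4, 9, 2], ![6, 10, 2], ![4, 11, 2], ![8, 11, 2],
  ![6, 12, 2], ![8, 13, 2], ![10, 13, 2], ![12, 14, 2], ![14, 14, 2], ![7, 0, 3],
  ![9, 0, 3], ![11, 1, 3], ![0, 2, 3], ![13, 2, 3], ![2, 3, 3], ![4, 3, 3],
  ![6, 4, 3], ![4, 5, 3], ![8, 5, 3], ![6, 6, 3], ![8, 7, 3], ![10, 7, 3],
  ![6, 8, 3], ![8, 9, 3], ![10, 9, 3], ![12, 10, 3], ![14, 10, 3], ![10, 11, 3],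
  ![12, 12, 3], ![14, 12, 3], ![1, 13, 3], ![3, 14, 3], ![5, 14, 3], ![0, 0, 4],
  ![13, 0, 4], ![2, 1, 4], ![4, 1, 4], ![6, 2, 4], ![8, 3, 4], ![10, 3, 4],
  ![12, 4, 4], ![14, 4, 4], ![1, 5, 4], ![10, 5, 4], ![12, 6, 4], ![14, 6, 4],
  ![1, 7, 4], ![3, 8, 4], ![12, 8, 4], ![14, 8, 4], ![1, 9, 4], ![3, 10, 4],
  ![5, 10, 4], ![1, 11, 4], ![7, 11, 4], ![3, 12, 4], ![5, 12, 4], ![7, 13, 4],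
  ![9, 13, 4], ![11, 14, 4], ![6, 0, 5], ![8, 0, 5], ![10, 1, 5], ![12, 2, 5],
  ![14, 2, 5], ![1, 3, 5], ![3, 3, 5], ![5, 4, 5], ![7, 5, 5], ![3, 6, 5],
  ![5, 6, 5], ![7, 7, 5], ![9, 7, 5], ![5, 8, 5], ![7, 9, 5], ![9, 9, 5],
  ![11, 10, 5], ![9, 11, 5], ![13, 11, 5], ![11, 12, 5], ![0, 13, 5], ![13, 13, 5],
  ![2, 14, 5], ![4, 14, 5], ![12, 0, 6], ![14, 0, 6], ![1, 1, 6], ![3, 1, 6],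
  ![5, 2, 6], ![7, 2, 6], ![9, 3, 6], ![11, 4, 6], ![13, 4, 6], ![0, 5, 6],
  ![9, 5, 6], ![11, 6, 6], ![13, 6, 6], ![0, 7, 6], ![2, 8, 6], ![11, 8, 6],
  ![0, 9, 6], ![13, 9, 6], ![2, 10, 6], ![4, 10, 6], ![0, 11, 6], ![6, 11, 6],
  ![2, 12, 6], ![4, 12, 6], ![6, 13, 6], ![8, 13, 6], ![10, 14, 6], ![5, 0, 7],
  ![7, 0, 7], ![9, 1, 7], ![11, 2, 7], ![13, 2, 7], ![0, 3, 7], ![2, 3, 7],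
  ![4, 4, 7], ![6, 4, 7], ![2, 6, 7], ![4, 6, 7], ![6, 7, 7], ![8, 7, 7],
  ![4, 8, 7], ![6, 9, 7], ![8, 9, 7], ![10, 10, 7], ![8, 11, 7], ![12, 11, 7],
  ![10, 12, 7], ![12, 13, 7], ![14, 13, 7], ![1, 14, 7], ![3, 14, 7], ![11, 0, 8],
  ![13, 0, 8], ![0, 1, 8], ![2, 1, 8], ![4, 2, 8], ![6, 2, 8], ![8, 3, 8],
  ![10, 4, 8], ![12, 4, 8], ![8, 5, 8], ![14, 5, 8], ![10, 6, 8], ![12, 6, 8],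
  ![14, 7, 8], ![1, 8, 8], ![10, 8, 8], ![12, 8, 8], ![14, 9, 8], ![1, 10, 8],
  ![3, 10, 8], ![5, 11, 8], ![14, 11, 8], ![1, 12, 8], ![3, 12, 8], ![5, 13, 8],
  ![7, 13, 8], ![9, 14, 8], ![4, 0, 9], ![6, 0, 9], ![8, 1, 9], ![10, 2, 9],
  ![12, 2, 9], ![1, 3, 9], ![14, 3, 9], ![3, 4, 9], ![5, 4, 9], ![1, 6, 9],
  ![3, 6, 9], ![5, 6, 9], ![7, 7, 9], ![3, 8, 9], ![5, 8, 9], ![7, 9, 9],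
  ![9, 10, 9], ![7, 11, 9], ![11, 11, 9], ![9, 12, 9], ![11, 13, 9], ![13, 13, 9],
  ![0, 14, 9], ![2, 14, 9], ![10, 0, 10], ![12, 0, 10], ![1, 1, 10], ![14, 1, 10],
  ![3, 2, 10], ![5, 2, 10], ![7, 3, 10], ![9, 4, 10], ![11, 4, 10], ![7, 5, 10],
  ![13, 5, 10], ![9, 6, 10], ![11, 6, 10], ![13, 7, 10], ![0, 8, 10], ![9, 8, 10],
  ![11, 9, 10], ![13, 9, 10], ![0, 10, 10], ![2, 10, 10], ![4, 10, 10], ![13, 11, 10],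
  ![0, 12, 10], ![2, 12, 10], ![4, 12, 10], ![6, 13, 10], ![8, 14, 10], ![3, 0, 11],
  ![5, 0, 11], ![7, 1, 11], ![9, 2, 11], ![11, 2, 11], ![0, 3, 11], ![13, 3, 11],
  ![2, 4, 11], ![4, 4, 11], ![0, 6, 11], ![2, 6, 11], ![4, 6, 11], ![6, 7, 11],
  ![2, 8, 11], ![4, 8, 11], ![6, 9, 11], ![8, 10, 11], ![6, 11, 11], ![10, 11, 11],
  ![8, 12, 11], ![10, 13, 11], ![12, 13, 11], ![1, 14, 11], ![14, 14, 11], ![9, 0, 12],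
  ![11, 0, 12], ![0, 1, 12], ![13, 1, 12], ![2, 2, 12], ![4, 2, 12], ![6, 3, 12],
  ![8, 4, 12], ![6, 5, 12], ![10, 5, 12], ![13, 5, 12], ![8, 6, 12], ![10, 7, 12],
  ![12, 7, 12], ![8, 8, 12], ![10, 9, 12], ![12, 9, 12], ![14, 9, 12], ![1, 10, 12],
  ![3, 11, 12], ![12, 11, 12], ![1, 12, 12], ![14, 12, 12], ![3, 13, 12], ![5, 13, 12],
  ![7, 14, 12], ![3, 0, 13], ![5, 0, 13], ![7, 1, 13], ![9, 2, 13], ![11, 2, 13],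
  ![0, 3, 13], ![13, 3, 13], ![2, 4, 13], ![4, 4, 13], ![0, 5, 13], ![2, 6, 13],
  ![4, 6, 13], ![6, 7, 13], ![14, 7, 13], ![1, 8, 13], ![3, 9, 13], ![5, 9, 13],
  ![7, 10, 13], ![5, 11, 13], ![10, 11, 13], ![7, 12, 13], ![9, 13, 13], ![11, 13, 13],
  ![0, 14, 13], ![13, 14, 13], ![9, 0, 14], ![11, 0, 14], ![0, 1, 14], ![13, 1, 14],
  ![2, 2, 14], ![4, 2, 14], ![6, 3, 14], ![8, 4, 14], ![10, 4, 14], ![6, 5, 14],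
  ![8, 6, 14], ![10, 7, 14], ![12, 7, 14], ![8, 8, 14], ![10, 9, 14], ![12, 9, 14],
  ![14, 9, 14], ![1, 10, 14], ![3, 11, 14], ![12, 11, 14], ![1, 12, 14], ![14, 12, 14],
  ![3, 13, 14], ![5, 13, 14], ![7, 14, 14]]

lemma indepCertificate_length : indepCertificate.length = 381 := by
  decide +kernel

lemma indepCertificate_pairwise : indepCertificate.Pairwise (FarApart 15) := by
  decide +kernel

/-- There is an independent set of size 381 in the 3th strong power of the 15-cycle,
hence α(C_15^3) ≥ 381. -/
theorem indep_set_C15_pow3 :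
    (∃ S : Finset (Fin 3 → ZMod 15), S.card = 381 ∧
      ∀ u ∈ S, ∀ v ∈ S, u ≠ v → ∃ i, 2 ≤ circDist 15 (u i) (v i)) ∧
    381 ≤ indepNum (cyclePow 15 3) := by
  obtain ⟨S, hcard, hS⟩ := indepCertificate_pairwise.exists_finset_card_eq
  rw [indepCertificate_length] at hcard
  refine ⟨⟨S, hcard, hS⟩, hcard ▸ card_le_indepNum _ fun u hu v hv huv => ?_⟩
  exact (hS u hu v hv huv).not_adj
end

section
/- For every integer p > 3, the cycle graph C_p is prime with respect to the strong product: if C_p is isomorphic (as a simple graph) to the strong product G₁ ⊠ G₂ of two simple graphs G₁ and G₂ on finite vertex sets, then G₁ or G₂ has exactly one vertex. -/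
/-- The cycle graph `C_p` on vertex set `ZMod p`: distinct vertices `u, v` are
adjacent iff `u − v = ±1 (mod p)`. -/
def cycleGraph (p : ℕ) : SimpleGraph (ZMod p) where
  Adj u v := u ≠ v ∧ (u - v = 1 ∨ v - u = 1)
  symm := ⟨by
    intro u v ⟨h1, h2⟩
    exact ⟨h1.symm, h2.symm⟩⟩
  loopless := ⟨fun v h => h.1 rfl⟩

/-- The strong product of two simple graphs: distinct vertices `(u₁, u₂)` and
`(v₁, v₂)` are adjacent iff in each coordinate the entries are equal or adjacent. -/
def strongProd {V₁ V₂ : Type*} (G₁ : SimpleGraph V₁) (G₂ : SimpleGraph V₂) :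
    SimpleGraph (V₁ × V₂) where
  Adj u v := u ≠ v ∧ (u.1 = v.1 ∨ G₁.Adj u.1 v.1) ∧ (u.2 = v.2 ∨ G₂.Adj u.2 v.2)
  symm := ⟨by
    intro u v ⟨h1, h2, h3⟩
    refine ⟨h1.symm, ?_, ?_⟩
    · rcases h2 with h | h
      · exact Or.inl h.symm
      · exact Or.inr h.symm
    · rcases h3 with h | h
      · exact Or.inl h.symm
      · exact Or.inr h.symm⟩
  loopless := ⟨fun v h => h.1 rfl⟩

/-! If both factors have an edge, `uv` and `ab`, the strong product contains the triangle
`(u,a), (v,a), (v,b)`; but `C_p` is triangle-free for `p ≠ 3`. So one factor is edgeless, and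
since a connected strong product has connected factors, that factor has a single vertex. -/

lemma cycleGraph_connected (p : ℕ) : (cycleGraph p).Connected := by
  have step (x : ZMod p) : (cycleGraph p).Reachable x (x + 1) := by
    by_cases hx : x = x + 1
    · rw [← hx]
    · exact SimpleGraph.Adj.reachable ⟨hx, Or.inr (add_sub_cancel_left x 1)⟩
  have reach_zero (n : ℤ) : (cycleGraph p).Reachable 0 n := by
    induction n using Int.induction_on with
    | zero => simp
    | succ k ih =>
      push_cast at ih ⊢
      exact ih.trans (step k)
    | pred k ih =>
      push_cast at ih ⊢
      exact ih.trans (by simpa using (step (-k - 1)).symm)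
  refine ⟨fun x y => ?_⟩
  obtain ⟨m, rfl⟩ := ZMod.intCast_surjective x
  obtain ⟨n, rfl⟩ := ZMod.intCast_surjective y
  exact (reach_zero m).symm.trans (reach_zero n)

lemma cycleGraph_cliqueFree_three {p : ℕ} (hp : p ≠ 3) : (cycleGraph p).CliqueFree 3 := by
  intro s hs
  obtain ⟨x, y, z, ⟨hxy, dxy⟩, ⟨-, dxz⟩, ⟨-, dyz⟩, -⟩ := SimpleGraph.is3Clique_iff.mp hs
  rcases eq_or_ne p 1 with rfl | hp₁
  · exact hxy (Subsingleton.elim _ _)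
  have : Nontrivial (ZMod p) := ZMod.nontrivial_iff.mpr hp₁
  have three_ne_zero : (3 : ZMod p) ≠ 0 := fun h3 => by
    have hdvd := (ZMod.natCast_eq_zero_iff 3 p).mp (by exact_mod_cast h3)
    rcases Nat.prime_three.eq_one_or_self_of_dvd p hdvd with rfl | rfl <;> contradiction
  -- `x - z = (x - y) + (y - z)` is `0` or `±2`, and it is `±1`: this forces `1 = 0` or `3 = 0`.
  rcases dxy with h | h <;> rcases dyz with h' | h' <;> rcases dxz with h'' | h'' <;> grind

section StrongProd

variable {V₁ V₂ : Type*} {G₁ : SimpleGraph V₁} {G₂ : SimpleGraph V₂}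

lemma strongProd_reachable_fst {x y : V₁ × V₂} (h : (strongProd G₁ G₂).Reachable x y) :
    G₁.Reachable x.1 y.1 := by
  rw [SimpleGraph.reachable_iff_reflTransGen] at h ⊢
  exact h.lift' Prod.fst fun a b ⟨_, hab, _⟩ =>
    show Relation.ReflTransGen G₁.Adj a.1 b.1 from hab.elim (fun e => e ▸ .refl) .single

lemma strongProd_reachable_snd {x y : V₁ × V₂} (h : (strongProd G₁ G₂).Reachable x y) :
    G₂.Reachable x.2 y.2 := by
  rw [SimpleGraph.reachable_iff_reflTransGen] at h ⊢
  exact h.lift' Prod.snd fun a b ⟨_, _, hab⟩ =>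
    show Relation.ReflTransGen G₂.Adj a.2 b.2 from hab.elim (fun e => e ▸ .refl) .single

lemma SimpleGraph.Connected.of_strongProd_left (h : (strongProd G₁ G₂).Connected) :
    G₁.Connected := by
  obtain ⟨a, b⟩ := h.nonempty.some
  have : Nonempty V₁ := ⟨a⟩
  exact ⟨fun u v => strongProd_reachable_fst (h.preconnected (u, b) (v, b))⟩

lemma SimpleGraph.Connected.of_strongProd_right (h : (strongProd G₁ G₂).Connected) :
    G₂.Connected := by
  obtain ⟨a, b⟩ := h.nonempty.some
  have : Nonempty V₂ := ⟨b⟩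
  exact ⟨fun u v => strongProd_reachable_snd (h.preconnected (a, u) (a, v))⟩

lemma eq_bot_or_eq_bot_of_strongProd_cliqueFree_three
    (h : (strongProd G₁ G₂).CliqueFree 3) : G₁ = ⊥ ∨ G₂ = ⊥ := by
  classical
  by_contra! hne
  obtain ⟨u, v, huv⟩ := SimpleGraph.ne_bot_iff_exists_adj.mp hne.1
  obtain ⟨a, b, hab⟩ := SimpleGraph.ne_bot_iff_exists_adj.mp hne.2
  refine h {(u, a), (v, a), (v, b)} (SimpleGraph.is3Clique_triple_iff.mpr ⟨?_, ?_, ?_⟩)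
  · exact ⟨by simp [huv.ne], .inr huv, .inl rfl⟩
  · exact ⟨by simp [huv.ne], .inr huv, .inr hab⟩
  · exact ⟨by simp [hab.ne], .inl rfl, .inr hab⟩

end StrongProd

lemma Fintype.card_eq_one_of_connected_bot {V : Type*} [Fintype V]
    (h : (⊥ : SimpleGraph V).Connected) : Fintype.card V = 1 := by
  obtain ⟨_, ⟨v⟩⟩ := SimpleGraph.connected_bot_iff.mp h
  exact Fintype.card_eq_one_iff.mpr ⟨v, fun _ => Subsingleton.elim _ _⟩

/-- For `p > 3`, the cycle `C_p` is prime with respect to the strong product: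
if `C_p` is isomorphic to `G₁ ⊠ G₂` for graphs on finite vertex sets, then
`G₁` or `G₂` has exactly one vertex. -/
theorem cycleGraph_prime (p : ℕ) (hp : 3 < p)
    {V₁ V₂ : Type*} [Fintype V₁] [Fintype V₂]
    (G₁ : SimpleGraph V₁) (G₂ : SimpleGraph V₂)
    (h : Nonempty (cycleGraph p ≃g strongProd G₁ G₂)) :
    Fintype.card V₁ = 1 ∨ Fintype.card V₂ = 1 := by
  obtain ⟨e⟩ := h
  have hconn : (strongProd G₁ G₂).Connected := e.connected_iff.mp (cycleGraph_connected p)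
  have hfree : (strongProd G₁ G₂).CliqueFree 3 :=
    (cycleGraph_cliqueFree_three (by omega)).comap e.symm.isContained
  rcases eq_bot_or_eq_bot_of_strongProd_cliqueFree_three hfree with rfl | rfl
  · exact .inl (Fintype.card_eq_one_of_connected_bot hconn.of_strongProd_left)
  · exact .inr (Fintype.card_eq_one_of_connected_bot hconn.of_strongProd_right)
end
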